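/- For every X∈𝒮 one of the following two alternatives holds: (I) m_{s,t}=2 for all distinct s,t∈X (Γ_X has no edge); or (II) there exists a finite m≥3 such that X is partitioned into pairs {s,t} with m_{s,t}=m, and m_{s,t}=2 for all s,t∈X not belonging to a common pair (Γ_X is a disjoint union of edges with label m). -/
import Mathlib
set_option maxHeartbeats 1000000


noncomputable section

open Real

namespace CoxeterFixedPoints

/-- `(V, B, ε)` is a root basis of the Coxeter graph whose Coxeter matrix is `M`
(the entry `0` of a Coxeter matrix stands for `∞`). -/
def IsRootBasis {S V : Type*} [AddCommGroup V] [Module ℝ V]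
    (M : CoxeterMatrix S) (B : V →ₗ[ℝ] V →ₗ[ℝ] ℝ) (ε : S → V) : Prop :=
  (∀ x y : V, B x y = B y x) ∧
  (∀ s : S, B (ε s) (ε s) = 1) ∧
  (∀ s t : S, s ≠ t → M s t ≠ 0 →
    B (ε s) (ε t) = - Real.cos (Real.pi / (M s t : ℝ))) ∧
  (∀ s t : S, s ≠ t → M s t = 0 → B (ε s) (ε t) ≤ -1) ∧
  (∃ χ : V →ₗ[ℝ] ℝ, ∀ s : S, 0 < χ (ε s))

/-- The standard parabolic subgroup `W_X` of `W` generated by `X ⊆ S`. -/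
def parabolic {S W : Type*} [Group W] {M : CoxeterMatrix S} (cs : CoxeterSystem M W)
    (X : Set S) : Subgroup W :=
  Subgroup.closure (cs.simple '' X)

/-- `w` is the longest element of the standard parabolic subgroup `W_X`. -/
def IsLongestElement {S W : Type*} [Group W] {M : CoxeterMatrix S} (cs : CoxeterSystem M W)
    (X : Set S) (w : W) : Prop :=
  w ∈ parabolic cs X ∧ ∀ u ∈ parabolic cs X, cs.length u ≤ cs.length w

/-- `X ∈ 𝒮`, i.e. `X` is an orbit of `G` in `S` such that `W_X` is finite. -/
def IsFinOrbit {S W : Type*} [Group W] {M : CoxeterMatrix S} (cs : CoxeterSystem M W)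
    (G : Type*) [Group G] [MulAction G S] (X : Set S) : Prop :=
  (∃ s : S, X = MulAction.orbit G s) ∧ ((parabolic cs X : Set W)).Finite

/-- `a_X = Σ_{s ∈ X} ε_s`. -/
def aVec {S V : Type*} [AddCommGroup V] [Module ℝ V] (ε : S → V) (X : Set S) : V :=
  ∑ᶠ s ∈ X, ε s

/-- `ε̃_X = a_X / ⟨a_X, a_X⟩^{1/2}`. -/
def epsTilde {S V : Type*} [AddCommGroup V] [Module ℝ V]
    (B : V →ₗ[ℝ] V →ₗ[ℝ] ℝ) (ε : S → V) (X : Set S) : V :=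
  (Real.sqrt (B (aVec ε X) (aVec ε X)))⁻¹ • aVec ε X

/-- There is no edge of the Coxeter graph of `M` between a vertex of `X` and a
(distinct) vertex of `Y`. -/
def NoEdges {S : Type*} (M : CoxeterMatrix S) (X Y : Set S) : Prop :=
  ∀ s ∈ X, ∀ t ∈ Y, s ≠ t → M s t = 2

/-- `X` is of type I : `Γ_X` has no edge. -/
def TypeI {S : Type*} (M : CoxeterMatrix S) (X : Set S) : Prop :=
  ∀ s ∈ X, ∀ t ∈ X, s ≠ t → M s t = 2

/-- `X` is of type II_m : `X` is partitioned into pairs `{s, ι s}` with `m_{s, ι s} = m ≥ 3`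
(`m` finite), and `m_{s,t} = 2` for `s, t ∈ X` not belonging to a common pair. -/
def TypeII {S : Type*} (M : CoxeterMatrix S) (X : Set S) (m : ℕ) : Prop :=
  3 ≤ m ∧ ∃ ι : S → S,
    (∀ s ∈ X, ι s ∈ X ∧ ι s ≠ s ∧ ι (ι s) = s ∧ M s (ι s) = m) ∧
    (∀ s ∈ X, ∀ t ∈ X, t ≠ s → t ≠ ι s → M s t = 2)

/-- `Γ_{X ∪ Y}` is a disjoint union of single edges with label `m ≥ 3` (possibly `m = ∞`,
encoded by `0`), each edge joining a vertex of `X` to a vertex of `Y` :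
bi-orbit of type (1). -/
def BiOrbit1 {S : Type*} (M : CoxeterMatrix S) (X Y : Set S) (m : ℕ) : Prop :=
  (m = 0 ∨ 3 ≤ m) ∧
  ∃ σ : S → S, Set.BijOn σ X Y ∧
    (∀ x ∈ X, M x (σ x) = m) ∧
    (∀ x ∈ X, ∀ y ∈ Y, y ≠ σ x → M x y = 2) ∧
    NoEdges M X X ∧ NoEdges M Y Y

/-- `Γ_{E ∪ C}` is a disjoint union of paths `a − b − c` with both labels `3`, whose end
vertices lie in `E` and whose middle vertex lies in `C` : bi-orbit of type (2)
(in one of the two orientations). -/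
def BiOrbit2 {S : Type*} (M : CoxeterMatrix S) (E C : Set S) : Prop :=
  ∃ τ : S → S, Set.MapsTo τ E C ∧
    (∀ c ∈ C, {e | e ∈ E ∧ τ e = c}.ncard = 2) ∧
    (∀ e ∈ E, M e (τ e) = 3) ∧
    (∀ e ∈ E, ∀ c ∈ C, c ≠ τ e → M e c = 2) ∧
    NoEdges M E E ∧ NoEdges M C C

/-- `Γ_{D ∪ C}` is a disjoint union of paths `a − b − c − d` with `a, d ∈ D`, `b, c ∈ C`,
outer labels `3` and middle label `mid` : used for bi-orbits of types (3) and (4). -/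
def BiOrbitPath {S : Type*} (M : CoxeterMatrix S) (D C : Set S) (mid : ℕ) : Prop :=
  ∃ σ ι : S → S, Set.BijOn σ D C ∧
    (∀ c ∈ C, ι c ∈ C ∧ ι c ≠ c ∧ ι (ι c) = c ∧ M c (ι c) = mid) ∧
    (∀ d ∈ D, M d (σ d) = 3) ∧
    (∀ d ∈ D, ∀ c ∈ C, c ≠ σ d → M d c = 2) ∧
    (∀ c ∈ C, ∀ c' ∈ C, c' ≠ c → c' ≠ ι c → M c c' = 2) ∧
    NoEdges M D D

/-- Bi-orbit of type (3) : paths `a − b − c − d` with all labels `3`. -/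
def BiOrbit3 {S : Type*} (M : CoxeterMatrix S) (D C : Set S) : Prop :=
  BiOrbitPath M D C 3

/-- Bi-orbit of type (4) : paths `a − b − c − d` with labels `3, 4, 3`. -/
def BiOrbit4 {S : Type*} (M : CoxeterMatrix S) (D C : Set S) : Prop :=
  BiOrbitPath M D C 4

/-- `Γ_{L ∪ C}` is a disjoint union of stars with center in `C`, three leaves in `L`
and all labels `3` : bi-orbit of type (5) (in one of the two orientations). -/
def BiOrbit5 {S : Type*} (M : CoxeterMatrix S) (L C : Set S) : Prop :=
  ∃ τ : S → S, Set.MapsTo τ L C ∧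
    (∀ c ∈ C, {l | l ∈ L ∧ τ l = c}.ncard = 3) ∧
    (∀ l ∈ L, M l (τ l) = 3) ∧
    (∀ l ∈ L, ∀ c ∈ C, c ≠ τ l → M l c = 2) ∧
    NoEdges M L L ∧ NoEdges M C C

/-- `m` is the entry `m̃_{X,Y}` of the Coxeter matrix `M̃` of `Γ̃` (`0` stands for `∞`). -/
def TildeMIs {S : Type*} (M : CoxeterMatrix S) (X Y : Set S) (m : ℕ) : Prop :=
  (X = Y ∧ m = 1) ∨
  (X ≠ Y ∧
    ((NoEdges M X Y ∧ m = 2) ∨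
     (¬ NoEdges M X Y ∧
       ((BiOrbit1 M X Y m ∨ BiOrbit1 M Y X m) ∨
        ((BiOrbit2 M X Y ∨ BiOrbit2 M Y X) ∧ m = 4) ∨
        ((BiOrbit3 M X Y ∨ BiOrbit3 M Y X) ∧ m = 4) ∨
        ((BiOrbit4 M X Y ∨ BiOrbit4 M Y X) ∧ m = 8) ∨
        ((BiOrbit5 M X Y ∨ BiOrbit5 M Y X) ∧ m = 6) ∨
        ((∀ k : ℕ, ¬ BiOrbit1 M X Y k ∧ ¬ BiOrbit1 M Y X k) ∧
         (¬ BiOrbit2 M X Y ∧ ¬ BiOrbit2 M Y X) ∧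
         (¬ BiOrbit3 M X Y ∧ ¬ BiOrbit3 M Y X) ∧
         (¬ BiOrbit4 M X Y ∧ ¬ BiOrbit4 M Y X) ∧
         (¬ BiOrbit5 M X Y ∧ ¬ BiOrbit5 M Y X) ∧ m = 0)))))

/-- `v_X = |{t ∈ Y | m_{s,t} ≥ 3}|` (including `m_{s,t} = ∞`, encoded by `0`),
for a chosen `s` in the other orbit. -/
def vcount {S : Type*} (M : CoxeterMatrix S) (Y : Set S) (s : S) : ℕ :=
  {t | t ∈ Y ∧ (M s t = 0 ∨ 3 ≤ M s t)}.ncard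

/-- `p_X = Σ_{t ∈ Y} ⟨ε_s, ε_t⟩`, for a chosen `s` in the other orbit. -/
def psum {S V : Type*} [AddCommGroup V] [Module ℝ V]
    (B : V →ₗ[ℝ] V →ₗ[ℝ] ℝ) (ε : S → V) (Y : Set S) (s : S) : ℝ :=
  ∑ᶠ t ∈ Y, B (ε s) (ε t)

/-- The subgroup `W^G` of elements of `W` fixed by the action of `G` on `W`
given by `φ : G →* MulAut W`. -/
def fixedSubgroup {W G : Type*} [Group W] [Group G] (φ : G →* MulAut W) : Subgroup W where
  carrier := {w | ∀ g : G, φ g w = w}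
  one_mem' := fun g => map_one (φ g)
  mul_mem' := by
    intro a b ha hb g
    rw [map_mul, ha g, hb g]
  inv_mem' := by
    intro a ha g
    rw [map_inv, ha g]

/-- The subspace `V^G` of vectors of `V` fixed by the action of `G` on `V`
given by `ρ : G →* GL(V)`. -/
def fixedSubmodule {V G : Type*} [AddCommGroup V] [Module ℝ V] [Group G]
    (ρ : G →* (V ≃ₗ[ℝ] V)) : Submodule ℝ V where
  carrier := {x | ∀ g : G, ρ g x = x}
  zero_mem' := fun g => map_zero (ρ g)
  add_mem' := by
    intro a b ha hb g
    rw [map_add, ha g, hb g]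
  smul_mem' := by
    intro c x hx g
    rw [map_smul, hx g]


/-! ### Auxiliary machinery: the geometric representation and an averaged invariant form -/

section AuxGeom

variable {S : Type*} [Fintype S] (M : CoxeterMatrix S)

open Classical in
/-- Coefficient matrix of the standard bilinear form of the Coxeter matrix `M`
(with value `-1` for label `∞`). -/
noncomputable def kmat (s t : S) : ℝ :=
  if s = t then 1 else if M s t = 0 then -1 else -Real.cos (Real.pi / (M s t : ℝ))

lemma kmat_diag (s : S) : kmat M s s = 1 := by simp [kmat]

lemma kmat_symm (s t : S) : kmat M s t = kmat M t s := by
  unfold kmat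
  rcases eq_or_ne s t with rfl | h
  · simp
  · rw [if_neg h, if_neg (Ne.symm h), M.symmetric]

lemma kmat_of_ne {s t : S} (h : s ≠ t) (h0 : M s t ≠ 0) :
    kmat M s t = -Real.cos (Real.pi / (M s t : ℝ)) := by
  rw [kmat, if_neg h, if_neg h0]

lemma kmat_of_inf {s t : S} (h : s ≠ t) (h0 : M s t = 0) :
    kmat M s t = -1 := by
  rw [kmat, if_neg h, if_pos h0]

lemma two_le_M {s t : S} (h : s ≠ t) (h0 : M s t ≠ 0) : 2 ≤ M s t := by
  have := M.off_diagonal s t h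
  omega

lemma kmat_nonpos {s t : S} (h : s ≠ t) : kmat M s t ≤ 0 := by
  unfold kmat
  rw [if_neg h]
  split_ifs with h0
  · norm_num
  · have h2 : 2 ≤ M s t := two_le_M M h h0
    have hpos : (0:ℝ) < (M s t : ℝ) := by
      have : 0 < M s t := by omega
      exact_mod_cast this
    have hle : Real.pi / (M s t : ℝ) ≤ Real.pi / 2 := by
      apply div_le_div_of_nonneg_left Real.pi_pos.le (by norm_num)
      exact_mod_cast h2
    have : 0 ≤ Real.cos (Real.pi / (M s t : ℝ)) := by
      apply Real.cos_nonneg_of_mem_Icc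
      constructor
      · nlinarith [Real.pi_pos, div_nonneg Real.pi_pos.le hpos.le]
      · exact hle
    linarith

lemma kmat_le_neg_half {s t : S} (h : s ≠ t) (h2 : M s t ≠ 2) : kmat M s t ≤ -(1/2) := by
  unfold kmat
  rw [if_neg h]
  split_ifs with h0
  · norm_num
  · have h3 : 3 ≤ M s t := by have := M.off_diagonal s t h; omega
    have hpos : (0:ℝ) < (M s t : ℝ) := by
      have : 0 < M s t := by omega
      exact_mod_cast this
    have hle : Real.pi / (M s t : ℝ) ≤ Real.pi / 3 := by
      apply div_le_div_of_nonneg_left Real.pi_pos.le (by norm_num)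
      exact_mod_cast h3
    have := Real.cos_le_cos_of_nonneg_of_le_pi (x := Real.pi / (M s t : ℝ))
      (y := Real.pi / 3) (by positivity) (by linarith [Real.pi_pos]) hle
    rw [Real.cos_pi_div_three] at this
    linarith

open Classical in
/-- Standard basis vector. -/
noncomputable def evec (s : S) : S → ℝ := fun t => if t = s then 1 else 0

/-- The standard bilinear form of the Coxeter matrix `M`. -/
noncomputable def bform : (S → ℝ) →ₗ[ℝ] (S → ℝ) →ₗ[ℝ] ℝ :=
  LinearMap.mk₂ ℝ (fun x y => ∑ s, ∑ t, x s * kmat M s t * y t)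
    (by intro x x' y; simp only [Pi.add_apply]; rw [← Finset.sum_add_distrib]
        refine Finset.sum_congr rfl fun s _ => ?_; rw [← Finset.sum_add_distrib]
        refine Finset.sum_congr rfl fun t _ => ?_; ring)
    (by intro c x y; simp only [Pi.smul_apply, smul_eq_mul, Finset.mul_sum]
        refine Finset.sum_congr rfl fun s _ => ?_
        refine Finset.sum_congr rfl fun t _ => ?_; ring)
    (by intro x y y'; simp only [Pi.add_apply]; rw [← Finset.sum_add_distrib]
        refine Finset.sum_congr rfl fun s _ => ?_; rw [← Finset.sum_add_distrib]
        refine Finset.sum_congr rfl fun t _ => ?_; ring)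
    (by intro c x y; simp only [Pi.smul_apply, smul_eq_mul, Finset.mul_sum]
        refine Finset.sum_congr rfl fun s _ => ?_
        refine Finset.sum_congr rfl fun t _ => ?_; ring)

lemma bform_apply (x y : S → ℝ) : bform M x y = ∑ s, ∑ t, x s * kmat M s t * y t := rfl

lemma bform_e_left (s : S) (y : S → ℝ) :
    bform M (evec s) y = ∑ t', kmat M s t' * y t' := by
  classical
  rw [bform_apply]
  have h1 : ∀ s', ∑ t', evec s s' * kmat M s' t' * y t'
      = if s' = s then ∑ t', kmat M s' t' * y t' else 0 := by
    intro s'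
    by_cases h : s' = s
    · subst h; simp [evec, Finset.mul_sum]
    · simp [evec, h]
  rw [Finset.sum_congr rfl fun s' _ => h1 s']
  simp [Finset.sum_ite_eq']

lemma bform_e_e (s t : S) : bform M (evec s) (evec t) = kmat M s t := by
  classical
  rw [bform_e_left]
  simp [evec, mul_ite, mul_one, mul_zero, Finset.sum_ite_eq']

/-- Reflection in `u` with respect to `bform M`. -/
noncomputable def reflB (u : S → ℝ) : Module.End ℝ (S → ℝ) :=
  LinearMap.id - (2:ℝ) • (((bform M).flip u).smulRight u)

lemma reflB_apply (u x : S → ℝ) : reflB M u x = x - (2 * bform M x u) • u := by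
  simp [reflB, LinearMap.sub_apply, LinearMap.smul_apply, LinearMap.smulRight_apply,
    LinearMap.flip_apply, smul_smul]

lemma reflB_fix {u x : S → ℝ} (h : bform M x u = 0) : reflB M u x = x := by
  rw [reflB_apply, h]; simp

lemma reflB_neg (u : S → ℝ) (h : bform M u u = 1) : reflB M u u = -u := by
  rw [reflB_apply, h]
  module

lemma reflB_sq (u : S → ℝ) (h : bform M u u = 1) : reflB M u * reflB M u = 1 := by
  apply LinearMap.ext; intro x
  rw [Module.End.mul_apply, reflB_apply, reflB_apply]
  rw [map_sub, map_smul]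
  simp only [LinearMap.sub_apply, LinearMap.smul_apply, h, smul_eq_mul]
  rw [show bform M x u - 2 * bform M x u * 1 = - bform M x u by ring]
  show x - (2 * bform M x u) • u - (2 * -bform M x u) • u = x
  module

lemma trig1 (x θ : ℝ) :
    Real.sin (x + 2*θ)
      = (4 * Real.cos θ^2 - 1) * Real.sin x - 2*Real.cos θ * Real.sin (x - θ) := by
  rw [Real.sin_add, Real.cos_two_mul, Real.sin_two_mul, Real.sin_sub]; ring

lemma trig2 (x θ : ℝ) :
    Real.sin (x + θ) = 2*Real.cos θ * Real.sin x - Real.sin (x - θ) := by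
  rw [Real.sin_add, Real.sin_sub]; ring

lemma refl_rot_pow {u v : S → ℝ} {m : ℕ} (hm : 2 ≤ m)
    (huu : bform M u u = 1) (hvv : bform M v v = 1)
    (huv : bform M u v = -Real.cos (Real.pi / (m:ℝ)))
    (hvu : bform M v u = -Real.cos (Real.pi / (m:ℝ))) :
    (reflB M u * reflB M v) ^ m = 1 := by
  have hm0 : (0:ℝ) < (m:ℝ) := by
    have : 0 < m := by omega
    exact_mod_cast this
  set θ : ℝ := Real.pi / (m:ℝ) with hθ
  have hθpos : 0 < θ := by positivity
  have hθlt : θ < Real.pi := by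
    rw [hθ, div_lt_iff₀ hm0]
    nlinarith [Real.pi_pos, show (2:ℝ) ≤ (m:ℝ) by exact_mod_cast hm]
  have hs : 0 < Real.sin θ := Real.sin_pos_of_pos_of_lt_pi hθpos hθlt
  set c : ℝ := Real.cos θ with hc
  set A := reflB M u * reflB M v with hA
  have hAu : A u = (4*c^2-1) • u + (2*c) • v := by
    rw [hA, Module.End.mul_apply, reflB_apply M v u, huv]
    rw [map_sub, map_smul, reflB_apply M u u, huu, reflB_apply M u v, hvu]
    module
  have hAv : A v = (-(2*c)) • u + (-1 : ℝ) • v := by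
    rw [hA, Module.End.mul_apply, reflB_apply M v v, hvv]
    rw [map_sub, map_smul, reflB_apply M u v, hvu]
    module
  have key : ∀ n : ℕ,
      Real.sin θ • ((A^n) u)
        = Real.sin ((2*(n:ℝ)+1)*θ) • u + Real.sin ((2*(n:ℝ))*θ) • v
      ∧ Real.sin θ • ((A^n) v)
        = (-Real.sin ((2*(n:ℝ))*θ)) • u + (-Real.sin ((2*(n:ℝ)-1)*θ)) • v := by
    intro n
    induction n with
    | zero =>
      constructor
      · simp only [pow_zero, Module.End.one_apply, Nat.cast_zero]
        match_scalars <;> norm_num [Real.sin_neg]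
      · simp only [pow_zero, Module.End.one_apply, Nat.cast_zero]
        match_scalars <;> norm_num [Real.sin_neg]
    | succ n ih =>
      obtain ⟨ih1, ih2⟩ := ih
      have hp : ∀ x : S → ℝ, (A^(n+1)) x = A ((A^n) x) := by
        intro x; rw [pow_succ', Module.End.mul_apply]
      have e1 : (2*((n:ℝ)+1)+1)*θ = ((2*(n:ℝ)+1)*θ) + 2*θ := by ring
      have e2 : (2*(n:ℝ))*θ = ((2*(n:ℝ)+1)*θ) - θ := by ring
      have e3 : (2*((n:ℝ)+1))*θ = ((2*(n:ℝ)+1)*θ) + θ := by ring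
      have e4 : (2*((n:ℝ)+1))*θ = ((2*(n:ℝ))*θ) + 2*θ := by ring
      have e5 : (2*(n:ℝ)-1)*θ = ((2*(n:ℝ))*θ) - θ := by ring
      have e6 : (2*((n:ℝ)+1)-1)*θ = ((2*(n:ℝ))*θ) + θ := by ring
      constructor
      · rw [hp, ← map_smul, ih1, map_add, map_smul, map_smul, hAu, hAv]
        push_cast
        match_scalars
        · rw [e1, trig1, e2]; ring
        · rw [e3, trig2, e2]; ring
      · rw [hp, ← map_smul, ih2, map_add, map_smul, map_smul, hAu, hAv]
        push_cast
        match_scalars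
        · rw [e4, trig1, e5]; ring
        · rw [e6, trig2, e5]; ring
  have h2pi : (2*(m:ℝ))*θ = 2*Real.pi := by
    rw [hθ]; field_simp
  have hAmu : (A^m) u = u := by
    have := (key m).1
    rw [show (2*(m:ℝ)+1)*θ = θ + 2*Real.pi by rw [← h2pi]; ring] at this
    rw [h2pi] at this
    rw [Real.sin_add_two_pi, Real.sin_two_pi] at this
    apply smul_right_injective (S → ℝ) (ne_of_gt hs)
    simpa using this
  have hAmv : (A^m) v = v := by
    have := (key m).2
    rw [show (2*(m:ℝ)-1)*θ = 2*Real.pi - θ by rw [← h2pi]; ring] at this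
    rw [h2pi] at this
    rw [Real.sin_two_pi_sub, Real.sin_two_pi] at this
    apply smul_right_injective (S → ℝ) (ne_of_gt hs)
    simpa using this
  have hfix : ∀ y : S → ℝ, bform M y u = 0 → bform M y v = 0 → ∀ n : ℕ, (A^n) y = y := by
    intro y h1 h2 n
    have hAy : A y = y := by
      rw [hA, Module.End.mul_apply, reflB_fix M h2, reflB_fix M h1]
    induction n with
    | zero => simp
    | succ n ih => rw [pow_succ, Module.End.mul_apply, hAy, ih]
  have h1c : (1:ℝ) - c^2 ≠ 0 := by
    have := Real.sin_sq θ
    nlinarith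
  apply LinearMap.ext; intro x
  set a : ℝ := (bform M x u + c * bform M x v)/(1-c^2) with ha
  set b : ℝ := (bform M x v + c * bform M x u)/(1-c^2) with hb
  set y : (S → ℝ) := x - a • u - b • v with hy
  have hyu : bform M y u = 0 := by
    rw [hy, map_sub, map_sub, map_smul, map_smul]
    simp only [LinearMap.sub_apply, LinearMap.smul_apply, huu, hvu, smul_eq_mul]
    rw [ha, hb]
    field_simp
    ring
  have hyv : bform M y v = 0 := by
    rw [hy, map_sub, map_sub, map_smul, map_smul]
    simp only [LinearMap.sub_apply, LinearMap.smul_apply, hvv, huv, smul_eq_mul]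
    rw [ha, hb]
    field_simp
    ring
  have hx : x = y + a • u + b • v := by rw [hy]; module
  rw [Module.End.one_apply, hx]
  rw [map_add, map_add, map_smul, map_smul, hAmu, hAmv, hfix y hyu hyv m]

/-- The values `reflB M (evec s)` satisfy the Coxeter relations. -/
lemma liftable : M.IsLiftable (fun s => reflB M (evec s)) := by
  intro s t
  rcases eq_or_ne s t with rfl | hne
  · rw [M.diagonal, pow_one]
    exact reflB_sq M _ (by rw [bform_e_e, kmat_diag])
  rcases eq_or_ne (M s t) 0 with h0 | h0
  · rw [h0, pow_zero]
  · exact refl_rot_pow M (two_le_M M hne h0) (by rw [bform_e_e, kmat_diag])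
      (by rw [bform_e_e, kmat_diag]) (by rw [bform_e_e, kmat_of_ne M hne h0])
      (by rw [bform_e_e, kmat_symm M t s, kmat_of_ne M hne h0])

end AuxGeom

section AuxC

/-- Averaged bilinear form over a finite set of group elements acting via `ρ`. -/
noncomputable def cform {S W : Type*} [Fintype S] [Group W]
    (ρ : W →* Module.End ℝ (S → ℝ)) (P : Finset W) :
    (S → ℝ) →ₗ[ℝ] (S → ℝ) →ₗ[ℝ] ℝ :=
  LinearMap.mk₂ ℝ (fun x y => ∑ w ∈ P, ∑ i, (ρ w x) i * (ρ w y) i)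
    (by intro x x' y
        rw [← Finset.sum_add_distrib]; refine Finset.sum_congr rfl fun w _ => ?_
        rw [← Finset.sum_add_distrib]; refine Finset.sum_congr rfl fun i _ => ?_
        rw [map_add]; simp only [Pi.add_apply]; ring)
    (by intro c x y
        simp only [smul_eq_mul, Finset.mul_sum]
        refine Finset.sum_congr rfl fun w _ => ?_
        refine Finset.sum_congr rfl fun i _ => ?_
        rw [map_smul]; simp only [Pi.smul_apply, smul_eq_mul]; ring)
    (by intro x y y'
        rw [← Finset.sum_add_distrib]; refine Finset.sum_congr rfl fun w _ => ?_
        rw [← Finset.sum_add_distrib]; refine Finset.sum_congr rfl fun i _ => ?_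
        rw [map_add]; simp only [Pi.add_apply]; ring)
    (by intro c x y
        simp only [smul_eq_mul, Finset.mul_sum]
        refine Finset.sum_congr rfl fun w _ => ?_
        refine Finset.sum_congr rfl fun i _ => ?_
        rw [map_smul]; simp only [Pi.smul_apply, smul_eq_mul]; ring)

lemma cform_apply {S W : Type*} [Fintype S] [Group W]
    (ρ : W →* Module.End ℝ (S → ℝ)) (P : Finset W) (x y : S → ℝ) :
    cform ρ P x y = ∑ w ∈ P, ∑ i, (ρ w x) i * (ρ w y) i := rfl

lemma cform_symm {S W : Type*} [Fintype S] [Group W]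
    (ρ : W →* Module.End ℝ (S → ℝ)) (P : Finset W) (x y : S → ℝ) :
    cform ρ P x y = cform ρ P y x := by
  rw [cform_apply, cform_apply]
  refine Finset.sum_congr rfl fun w _ => ?_
  refine Finset.sum_congr rfl fun i _ => ?_
  ring

end AuxC

/-- Key finiteness lemma: if `W_X` is finite but every vertex of `X` lying in the connected
component of `s₀` admits the stated neighbour configuration, we get a contradiction. -/
lemma heavy {S W : Type*} [Fintype S] [Group W] {M : CoxeterMatrix S}
    (cs : CoxeterSystem M W) (X : Set S)
    (hfin : ((parabolic cs X : Set W)).Finite)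
    (s₀ : S) (hs₀ : s₀ ∈ X)
    (hnb : ∀ z ∈ X, ∃ t₁ t₂, t₁ ∈ X ∧ t₂ ∈ X ∧ t₁ ≠ z ∧ t₂ ≠ z ∧
      M z t₁ ≠ 2 ∧ M z t₂ ≠ 2 ∧ (t₁ ≠ t₂ ∨ M z t₁ = 0)) : False := by
  classical
  set ρ : W →* Module.End ℝ (S → ℝ) := cs.lift ⟨fun s => reflB M (evec s), liftable M⟩ with hρ
  have hρs : ∀ s : S, ρ (cs.simple s) = reflB M (evec s) := fun s =>
    cs.lift_apply_simple (liftable M) s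
  set P : Finset W := hfin.toFinset with hP
  have hmemP : ∀ w : W, w ∈ P ↔ w ∈ parabolic cs X := fun w => hfin.mem_toFinset
  set C := cform ρ P with hCdef
  -- invariance
  have hinv : ∀ u ∈ parabolic cs X, ∀ x y : S → ℝ, C (ρ u x) (ρ u y) = C x y := by
    intro u hu x y
    rw [hCdef, cform_apply, cform_apply]
    refine Finset.sum_nbij' (fun w => w * u) (fun w => w * u⁻¹) ?_ ?_ ?_ ?_ ?_
    · intro w hw
      rw [hmemP] at hw ⊢
      exact mul_mem hw hu
    · intro w hw
      rw [hmemP] at hw ⊢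
      exact mul_mem hw (inv_mem hu)
    · intro w _; simp
    · intro w _; simp
    · intro w _
      refine Finset.sum_congr rfl fun i _ => ?_
      simp only [map_mul, Module.End.mul_apply]
  -- positivity
  have hCpos : ∀ (x : S → ℝ) (i : S), x i ≠ 0 → 0 < C x x := by
    intro x i hi
    have h1 : ∀ w ∈ P, 0 ≤ ∑ j, (ρ w x) j * (ρ w x) j :=
      fun w _ => Finset.sum_nonneg fun j _ => mul_self_nonneg _
    have hone : (1:W) ∈ P := by
      rw [hmemP]; exact Subgroup.one_mem _
    have h2 : (0:ℝ) < ∑ j, (ρ (1:W) x) j * (ρ (1:W) x) j := by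
      rw [map_one]
      refine Finset.sum_pos' (fun j _ => mul_self_nonneg _) ⟨i, Finset.mem_univ i, ?_⟩
      simp only [Module.End.one_apply]
      exact mul_self_pos.mpr hi
    calc (0:ℝ) < ∑ j, (ρ (1:W) x) j * (ρ (1:W) x) j := h2
    _ ≤ ∑ w ∈ P, ∑ j, (ρ w x) j * (ρ w x) j := Finset.single_le_sum h1 hone
    _ = C x x := (cform_apply ρ P x x).symm
  -- L1
  have hL1 : ∀ t ∈ X, ∀ x : S → ℝ,
      C x (evec t) = C (evec t) (evec t) * bform M x (evec t) := by
    intro t ht x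
    have hmem : cs.simple t ∈ parabolic cs X := Subgroup.subset_closure ⟨t, ht, rfl⟩
    set a := bform M x (evec t) with ha
    set x' : S → ℝ := x - a • evec t with hx'
    have h0 : bform M x' (evec t) = 0 := by
      rw [hx', map_sub, map_smul]
      simp only [LinearMap.sub_apply, LinearMap.smul_apply, bform_e_e, kmat_diag, smul_eq_mul,
        ← ha]
      ring
    have hfix : ρ (cs.simple t) x' = x' := by rw [hρs, reflB_fix M h0]
    have hneg : ρ (cs.simple t) (evec t) = -(evec t) := by
      rw [hρs, reflB_neg M _ (by rw [bform_e_e, kmat_diag])]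
    have h1 : C x' (evec t) = 0 := by
      have h2 := hinv _ hmem x' (evec t)
      rw [hfix, hneg, map_neg] at h2
      linarith
    have hxs : x = x' + a • evec t := by rw [hx']; module
    have hexp : C x (evec t) = C x' (evec t) + a * C (evec t) (evec t) := by
      conv_lhs => rw [hxs]
      rw [map_add, map_smul]
      simp [LinearMap.add_apply, LinearMap.smul_apply, smul_eq_mul]
    rw [hexp, h1]
    ring
  -- L2 : constancy along edges
  have hL2 : ∀ a b : S, a ∈ X → b ∈ X → a ≠ b → M a b ≠ 2 →
      C (evec a) (evec a) = C (evec b) (evec b) := by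
    intro a b ha hb hne hm2
    have h1 := hL1 b hb (evec a)
    have h2 := hL1 a ha (evec b)
    have hsymm : C (evec a) (evec b) = C (evec b) (evec a) := cform_symm ρ P _ _
    rw [bform_e_e] at h1 h2
    rw [kmat_symm M b a] at h2
    have hk : kmat M a b ≤ -(1/2) := kmat_le_neg_half M hne hm2
    have h3 : C (evec a) (evec a) * kmat M a b = C (evec b) (evec b) * kmat M a b := by
      rw [← h2, ← hsymm, h1]
    exact mul_right_cancel₀ (by linarith) h3
  -- the connected component of s₀
  set Y : Set S := {t | Relation.ReflTransGen
    (fun a b => a ∈ X ∧ b ∈ X ∧ a ≠ b ∧ M a b ≠ 2) s₀ t} with hYdef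
  have hs₀Y : s₀ ∈ Y := Relation.ReflTransGen.refl
  have hYX : ∀ t ∈ Y, t ∈ X := by
    intro t ht
    induction ht with
    | refl => exact hs₀
    | tail h₁ h₂ ih => exact h₂.2.1
  have hYadj : ∀ z ∈ Y, ∀ t, t ∈ X → t ≠ z → M z t ≠ 2 → t ∈ Y := by
    intro z hz t h1 h2 h3
    exact Relation.ReflTransGen.tail hz ⟨hYX z hz, h1, Ne.symm h2, h3⟩
  have hlam : ∀ t ∈ Y, C (evec t) (evec t) = C (evec s₀) (evec s₀) := by
    intro t ht
    induction ht with
    | refl => rfl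
    | tail h₁ h₂ ih =>
      rw [← hL2 _ _ h₂.1 h₂.2.1 h₂.2.2.1 h₂.2.2.2]
      exact ih
  set Yf : Finset S := (Set.toFinite Y).toFinset with hYf
  have hmemY : ∀ t : S, t ∈ Yf ↔ t ∈ Y := fun t => (Set.toFinite Y).mem_toFinset
  set q : (S → ℝ) := ∑ t ∈ Yf, evec t with hq
  have hs₀Yf : s₀ ∈ Yf := (hmemY s₀).2 hs₀Y
  have hqs₀ : q s₀ = 1 := by
    rw [hq, Finset.sum_apply]
    simp only [evec]
    rw [Finset.sum_ite_eq]
    simp [hs₀Yf]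
  -- expansion
  have hbq : ∀ t : S, bform M q (evec t) = ∑ s ∈ Yf, kmat M s t := by
    intro t
    have h2 := map_sum (bform M) (fun s => evec s) Yf
    rw [← hq] at h2
    rw [h2]
    simp only [LinearMap.coe_sum, Finset.sum_apply]
    exact Finset.sum_congr rfl fun s _ => bform_e_e M s t
  have hCexp : C q q = C (evec s₀) (evec s₀) * ∑ s ∈ Yf, ∑ t ∈ Yf, kmat M s t := by
    have h1 : C q q = ∑ t ∈ Yf, C q (evec t) := by
      have h2 := map_sum (C q) (fun t => evec t) Yf
      rw [← hq] at h2
      exact h2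
    calc C q q = ∑ t ∈ Yf, C q (evec t) := h1
      _ = ∑ t ∈ Yf, C (evec s₀) (evec s₀) * ∑ s ∈ Yf, kmat M s t := by
          refine Finset.sum_congr rfl fun t htY => ?_
          rw [hL1 t (hYX t ((hmemY t).1 htY)) q, hbq t, hlam t ((hmemY t).1 htY)]
      _ = C (evec s₀) (evec s₀) * ∑ t ∈ Yf, ∑ s ∈ Yf, kmat M s t := by
          rw [Finset.mul_sum]
      _ = C (evec s₀) (evec s₀) * ∑ s ∈ Yf, ∑ t ∈ Yf, kmat M s t := by
          rw [Finset.sum_comm]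
  -- row bound
  have hrow : ∀ s ∈ Yf, ∑ t ∈ Yf.erase s, kmat M s t ≤ -1 := by
    intro s hsYf
    have hsY : s ∈ Y := (hmemY s).1 hsYf
    have hsX : s ∈ X := hYX s hsY
    obtain ⟨t₁, t₂, ht₁X, ht₂X, ht₁ne, ht₂ne, hm₁, hm₂, hor⟩ := hnb s hsX
    have ht₁Yf : t₁ ∈ Yf.erase s := by
      rw [Finset.mem_erase]
      exact ⟨ht₁ne, (hmemY t₁).2 (hYadj s hsY t₁ ht₁X ht₁ne hm₁)⟩
    have ht₂Yf : t₂ ∈ Yf.erase s := by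
      rw [Finset.mem_erase]
      exact ⟨ht₂ne, (hmemY t₂).2 (hYadj s hsY t₂ ht₂X ht₂ne hm₂)⟩
    have hnonpos : ∀ t ∈ Yf.erase s, kmat M s t ≤ 0 := fun t ht =>
      kmat_nonpos M (Ne.symm (Finset.ne_of_mem_erase ht))
    rcases hor with hne12 | hinf
    · have hsub : ({t₁, t₂} : Finset S) ⊆ Yf.erase s := by
        intro x hx
        rcases Finset.mem_insert.mp hx with rfl | hx
        · exact ht₁Yf
        · rw [Finset.mem_singleton] at hx; subst hx; exact ht₂Yf
      have hsd := Finset.sum_sdiff (f := kmat M s) hsub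
      have h12 : ∑ t ∈ ({t₁, t₂} : Finset S), kmat M s t = kmat M s t₁ + kmat M s t₂ :=
        Finset.sum_pair hne12
      have hrest : ∑ t ∈ Yf.erase s \ {t₁, t₂}, kmat M s t ≤ 0 :=
        Finset.sum_nonpos fun t ht => hnonpos t (Finset.mem_sdiff.mp ht).1
      have hk1 : kmat M s t₁ ≤ -(1/2) := kmat_le_neg_half M (Ne.symm ht₁ne) hm₁
      have hk2 : kmat M s t₂ ≤ -(1/2) := kmat_le_neg_half M (Ne.symm ht₂ne) hm₂
      linarith [hsd, h12]
    · have hsub : ({t₁} : Finset S) ⊆ Yf.erase s := by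
        intro x hx
        rw [Finset.mem_singleton] at hx; subst hx; exact ht₁Yf
      have hsd := Finset.sum_sdiff (f := kmat M s) hsub
      have h1 : ∑ t ∈ ({t₁} : Finset S), kmat M s t = kmat M s t₁ := Finset.sum_singleton _ _
      have hk1 : kmat M s t₁ = -1 := kmat_of_inf M (Ne.symm ht₁ne) hinf
      have hrest : ∑ t ∈ Yf.erase s \ {t₁}, kmat M s t ≤ 0 :=
        Finset.sum_nonpos fun t ht => hnonpos t (Finset.mem_sdiff.mp ht).1
      linarith [hsd]
  have htot : ∑ s ∈ Yf, ∑ t ∈ Yf, kmat M s t ≤ 0 := by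
    refine Finset.sum_nonpos fun s hs => ?_
    have hadd := Finset.add_sum_erase Yf (kmat M s) hs
    have h1 := hrow s hs
    have h2 : kmat M s s = 1 := kmat_diag M s
    nlinarith [hadd]
  have hpos : 0 < C q q := hCpos q s₀ (by rw [hqs₀]; norm_num)
  have hlpos : 0 < C (evec s₀) (evec s₀) := by
    refine hCpos (evec s₀) s₀ ?_
    simp [evec]
  nlinarith [hCexp, mul_nonpos_of_nonneg_of_nonpos hlpos.le htot]

/-- every `X ∈ 𝒮` is of type I or of type II_m for some finite `m ≥ 3`. -/
theorem orbit_type_I_or_type_II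
    {S W G : Type*} [Fintype S] [Group W] [Group G] [MulAction G S]
    (M : CoxeterMatrix S) (cs : CoxeterSystem M W)
    (hGM : ∀ (g : G) (s t : S), M (g • s) (g • t) = M s t)
    (X : Set S) (hX : IsFinOrbit cs G X) :
    TypeI M X ∨ ∃ m : ℕ, TypeII M X m := by
  classical
  obtain ⟨⟨sb, hXorb⟩, hfin⟩ := hX
  by_cases hI : ∀ s ∈ X, ∀ t ∈ X, s ≠ t → M s t = 2
  · exact Or.inl hI
  · push_neg at hI
    obtain ⟨s₀, hs₀X, t₀, ht₀X, hne₀, hm₀⟩ := hI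
    have hXg : ∀ (g : G), ∀ t, t ∈ X → g • t ∈ X := by
      intro g t ht
      rw [hXorb] at ht ⊢
      obtain ⟨h, rfl⟩ := MulAction.mem_orbit_iff.mp ht
      exact MulAction.mem_orbit_iff.mpr ⟨g * h, mul_smul g h sb⟩
    have htrans : ∀ z ∈ X, ∀ z' ∈ X, ∃ g : G, g • z = z' := by
      intro z hz z' hz'
      rw [hXorb] at hz hz'
      obtain ⟨g1, hg1⟩ := MulAction.mem_orbit_iff.mp hz
      obtain ⟨g2, hg2⟩ := MulAction.mem_orbit_iff.mp hz'
      refine ⟨g2 * g1⁻¹, ?_⟩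
      rw [← hg1, ← hg2, smul_smul, mul_assoc, inv_mul_cancel, mul_one]
    have hnbr : ∀ z ∈ X, ∃ t, t ∈ X ∧ t ≠ z ∧ M z t ≠ 2 ∧ M z t = M s₀ t₀ := by
      intro z hz
      obtain ⟨g, hg⟩ := htrans s₀ hs₀X z hz
      refine ⟨g • t₀, hXg g t₀ ht₀X, ?_, ?_, ?_⟩
      · intro h
        rw [← hg] at h
        exact hne₀ (MulAction.injective g h).symm
      · rw [← hg, hGM g s₀ t₀]; exact hm₀
      · rw [← hg]; exact hGM g s₀ t₀
    have huniq : ∀ z ∈ X, ∀ t₁ t₂, t₁ ∈ X → t₂ ∈ X → t₁ ≠ z → t₂ ≠ z →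
        M z t₁ ≠ 2 → M z t₂ ≠ 2 → t₁ = t₂ := by
      intro z hz t₁ t₂ h1X h2X h1z h2z h1m h2m
      by_contra hne
      refine heavy cs X hfin z hz ?_
      intro z' hz'
      obtain ⟨g, hg⟩ := htrans z hz z' hz'
      refine ⟨g • t₁, g • t₂, hXg g t₁ h1X, hXg g t₂ h2X, ?_, ?_, ?_, ?_, Or.inl ?_⟩
      · intro h; rw [← hg] at h; exact h1z (MulAction.injective g h)
      · intro h; rw [← hg] at h; exact h2z (MulAction.injective g h)
      · rw [← hg, hGM g z t₁]; exact h1m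
      · rw [← hg, hGM g z t₂]; exact h2m
      · intro h; exact hne (MulAction.injective g h)
    have hm0 : M s₀ t₀ ≠ 0 := by
      intro h0
      refine heavy cs X hfin s₀ hs₀X ?_
      intro z hz
      obtain ⟨t, htX, htz, htm, hteq⟩ := hnbr z hz
      exact ⟨t, t, htX, htX, htz, htz, htm, htm, Or.inr (by rw [hteq]; exact h0)⟩
    have hm3 : 3 ≤ M s₀ t₀ := by
      have h1 := M.off_diagonal s₀ t₀ hne₀
      omega
    set ι : S → S := fun z => if h : z ∈ X then (hnbr z h).choose else z with hι
    have hιspec : ∀ z (hz : z ∈ X), ι z ∈ X ∧ ι z ≠ z ∧ M z (ι z) ≠ 2 ∧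
        M z (ι z) = M s₀ t₀ := by
      intro z hz
      rw [hι]
      simp only [dif_pos hz]
      exact (hnbr z hz).choose_spec
    have hιuniq : ∀ z (hz : z ∈ X), ∀ t, t ∈ X → t ≠ z → M z t ≠ 2 → t = ι z := by
      intro z hz t htX htz htm
      obtain ⟨h1, h2, h3, _⟩ := hιspec z hz
      exact huniq z hz t (ι z) htX h1 htz h2 htm h3
    refine Or.inr ⟨M s₀ t₀, hm3, ι, ?_, ?_⟩
    · intro s hs
      obtain ⟨h1, h2, h3, h4⟩ := hιspec s hs
      refine ⟨h1, h2, ?_, h4⟩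
      have hsnbr : s = ι (ι s) := by
        refine hιuniq (ι s) h1 s hs (Ne.symm h2) ?_
        rw [M.symmetric]; exact h3
      exact hsnbr.symm
    · intro s hs t ht hts htι
      by_contra hM2
      exact htι (hιuniq s hs t ht hts hM2)


end CoxeterFixedPoints
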